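/- Assume L ⊆ Σ^ω is recognized by some deterministic co-Büchi automaton. Then the canonical automaton A_{≡_L} accepts exactly L, i.e., L(A_{≡_L}) = L. -/

import Mathlib

open Classical

/-- Rank of a transition in a co-Büchi automaton: `one` or `two`. -/
inductive Rk | one | two
deriving DecidableEq

/-- A co-Büchi automaton over alphabet `A` with state type `Q`:
initial states and a transition relation where each transition carries a rank. -/
structure CoBuchi (A : Type) (Q : Type) where
  init : Set Q
  delta : Set (Q × A × Rk × Q)

namespace CoBuchi

variable {A Q : Type}

/-- Every state has an outgoing transition on every letter. -/
def Total (M : CoBuchi A Q) : Prop :=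
  ∀ q a, ∃ r q', (q, a, r, q') ∈ M.delta

/-- The prefix `α[0..n-1]` of an infinite word. -/
def prefW (α : ℕ → A) (n : ℕ) : List A := (List.range n).map α

/-- The infinite word `a·w`. -/
def consW (a : A) (w : ℕ → A) : ℕ → A := fun n => match n with
  | 0 => a
  | Nat.succ k => w k

/-- `L(M,q)`: infinite words having a run from `q` with only finitely many rank-1
transitions. -/
def LangFrom (M : CoBuchi A Q) (q : Q) : Set (ℕ → A) :=
  { w | ∃ (ρ : ℕ → Q) (r : ℕ → Rk), ρ 0 = q ∧
        (∀ n, (ρ n, w n, r n, ρ (n + 1)) ∈ M.delta) ∧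
        ∃ N, ∀ n, N ≤ n → r n = Rk.two }

/-- `L(M)`: the language of the automaton. -/
def Lang (M : CoBuchi A Q) : Set (ℕ → A) :=
  { w | ∃ q ∈ M.init, w ∈ M.LangFrom q }

/-- `q →₂^w q'`: a finite run from `q` to `q'` on `w` using only rank-2 transitions. -/
def SafeReach (M : CoBuchi A Q) : Q → List A → Q → Prop
  | q, [], q' => q = q'
  | q, a :: w, q' => ∃ p, (q, a, Rk.two, p) ∈ M.delta ∧ SafeReach M p w q'

/-- A finite run from `q` to `q'` on `w` using transitions of any rank. -/
def Reach (M : CoBuchi A Q) : Q → List A → Q → Prop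
  | q, [], q' => q = q'
  | q, a :: w, q' => ∃ r p, (q, a, r, p) ∈ M.delta ∧ Reach M p w q'

/-- Safe language of a state. -/
def Lsf (M : CoBuchi A Q) (q : Q) : Set (List A) := { w | ∃ q', M.SafeReach q w q' }

/-- Semantically-deterministic: every transition respects residuals. -/
def SemDet (M : CoBuchi A Q) : Prop :=
  ∀ p a rk q, (p, a, rk, q) ∈ M.delta →
    M.LangFrom q = { w | consW a w ∈ M.LangFrom p }

/-- Unsafe-saturated: all residual-respecting rank-1 transitions are present. -/
def UnsafeSat (M : CoBuchi A Q) : Prop :=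
  ∀ p a q, M.LangFrom q = { w | consW a w ∈ M.LangFrom p } →
    (p, a, Rk.one, q) ∈ M.delta

/-- Safe-deterministic: at most one rank-2 transition per state and letter. -/
def SafeDet (M : CoBuchi A Q) : Prop :=
  ∀ p a q q', (p, a, Rk.two, q) ∈ M.delta → (p, a, Rk.two, q') ∈ M.delta → q = q'

/-- Normalized: every rank-2 transition can be completed to a rank-2 loop. -/
def Normalized (M : CoBuchi A Q) : Prop :=
  ∀ q a q', (q, a, Rk.two, q') ∈ M.delta → ∃ x, M.SafeReach q' x q

/-- Deterministic: one initial state, exactly one transition per state and letter. -/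
def Deterministic (M : CoBuchi A Q) : Prop :=
  (∃! q, q ∈ M.init) ∧ ∀ p a, ∃! t : Rk × Q, (p, a, t.1, t.2) ∈ M.delta

/-- History-deterministic: a strategy `σ : Σ* → Q` resolving the nondeterminism,
whose run on every `α ∈ L(M)` can be ranked with finitely many rank-1 transitions. -/
def HistoryDet (M : CoBuchi A Q) : Prop :=
  ∃ σ : List A → Q, σ [] ∈ M.init ∧
    (∀ w a, ∃ rk, (σ w, a, rk, σ (w ++ [a])) ∈ M.delta) ∧
    ∀ α ∈ M.Lang, ∃ r : ℕ → Rk,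
      (∀ n, (σ (prefW α n), α n, r n, σ (prefW α (n + 1))) ∈ M.delta) ∧
      ∃ N, ∀ n, N ≤ n → r n = Rk.two

/-- `q` and `q'` are in the same safe SCC (mutually reachable via rank-2 runs). -/
def SameSafeSCC (M : CoBuchi A Q) (q q' : Q) : Prop :=
  (∃ x, M.SafeReach q x q') ∧ (∃ y, M.SafeReach q' y q)

end CoBuchi

section LangDefs

variable {A : Type} [Nonempty A]

/-- The infinite word `u·w`. -/
def appW (u : List A) (w : ℕ → A) : ℕ → A :=
  fun n => if h : n < u.length then u.get ⟨n, h⟩ else w (n - u.length)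

/-- The infinite word `v^ω` (arbitrary if `v = ε`). -/
noncomputable def iterW (v : List A) : ℕ → A :=
  fun n =>
    if h : v = [] then Classical.arbitrary A
    else v.get ⟨n % v.length, Nat.mod_lt _ (List.length_pos_of_ne_nil h)⟩

/-- The ultimately periodic word `u v^ω`. -/
noncomputable def upW (u v : List A) : ℕ → A := appW u (iterW v)

/-- The right congruence `u ∼_L v`. -/
def SimL (L : Set (ℕ → A)) (u v : List A) : Prop :=
  ∀ w : ℕ → A, appW u w ∈ L ↔ appW v w ∈ L

/-- `(u,v) ≈_L ⊥`: `v ≠ ε` and `u(vx)^ω ∉ L` for all `x` with `uvx ∼_L u`. -/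
def ApproxBot (L : Set (ℕ → A)) (u v : List A) : Prop :=
  v ≠ [] ∧ ∀ x : List A, SimL L (u ++ v ++ x) u → upW u (v ++ x) ∉ L

/-- The safe language of a pair: `sfl(u,v) = {x | (u,vx) not ≈_L ⊥}`. -/
def Sfl (L : Set (ℕ → A)) (u v : List A) : Set (List A) :=
  { x | ¬ ApproxBot L u (v ++ x) }

/-- `(u,v) ≡_L (u',v')`. -/
def EquivL (L : Set (ℕ → A)) (u v u' v' : List A) : Prop :=
  SimL L (u ++ v) (u' ++ v') ∧ Sfl L u v = Sfl L u' v'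

/-- `(u,v)` is pointed. -/
def IsPointed (L : Set (ℕ → A)) (u v : List A) : Prop :=
  ¬ ApproxBot L u v ∧
    ∀ u₁ u₂ : List A, SimL L (u₁ ++ u₂) u → ¬ ApproxBot L u₁ (u₂ ++ v) →
      Sfl L u v = Sfl L u₁ (u₂ ++ v)

/-- `(u,v) ≈_L (u',v')` (for pairs with nonempty second components). -/
def ApproxL (L : Set (ℕ → A)) (u v u' v' : List A) : Prop :=
  SimL L u u' ∧ SimL L (u ++ v) (u' ++ v') ∧
    ∀ x : List A, SimL L (u ++ v ++ x) u →
      (upW u (v ++ x) ∈ L ↔ upW u' (v' ++ x) ∈ L)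

/-- `L` is recognized by some (total) deterministic co-Büchi automaton. -/
def DCWRecognizable (L : Set (ℕ → A)) : Prop :=
  ∃ (Q : Type) (_ : Fintype Q) (M : CoBuchi A Q), M.Deterministic ∧ M.Lang = L

/-- IsPointed pairs. -/
def PointedPair (L : Set (ℕ → A)) : Type :=
  { p : List A × List A // IsPointed L p.1 p.2 }

/-- `≡_L` as a setoid on all pairs. -/
def equivLSetoid (L : Set (ℕ → A)) : Setoid (List A × List A) where
  r p q := EquivL L p.1 p.2 q.1 q.2
  iseqv := {
    refl := fun p => ⟨fun w => Iff.rfl, rfl⟩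
    symm := fun h => ⟨fun w => (h.1 w).symm, h.2.symm⟩
    trans := fun h g => ⟨fun w => (h.1 w).trans (g.1 w), h.2.trans g.2⟩ }

/-- `≡_L` as a setoid on pointed pairs. -/
def canonSetoid (L : Set (ℕ → A)) : Setoid (PointedPair L) where
  r p q := EquivL L p.1.1 p.1.2 q.1.1 q.1.2
  iseqv := {
    refl := fun p => ⟨fun w => Iff.rfl, rfl⟩
    symm := fun h => ⟨fun w => (h.1 w).symm, h.2.symm⟩
    trans := fun h g => ⟨fun w => (h.1 w).trans (g.1 w), h.2.trans g.2⟩ }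

/-- States of the canonical automaton: `≡_L`-classes of pointed pairs. -/
def CanonState (L : Set (ℕ → A)) : Type := Quotient (canonSetoid L)

/-- The class `⟦u,v⟧` of a pointed pair. -/
def cls (L : Set (ℕ → A)) (u v : List A) (h : IsPointed L u v) : CanonState L :=
  Quotient.mk (canonSetoid L) ⟨(u, v), h⟩

/-- The canonical automaton `A_{≡_L}`. -/
def canonAut (L : Set (ℕ → A)) : CoBuchi A (CanonState L) where
  init := { s | ∃ (u v : List A) (h : IsPointed L u v),
              s = cls L u v h ∧ SimL L (u ++ v) [] }
  delta := { t |
    (∃ (u v : List A) (h : IsPointed L u v) (h' : IsPointed L u (v ++ [t.2.1])),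
        ¬ ApproxBot L u (v ++ [t.2.1]) ∧
        t.1 = cls L u v h ∧ t.2.2.1 = Rk.two ∧
        t.2.2.2 = cls L u (v ++ [t.2.1]) h') ∨
    (∃ (u v u' v' : List A) (h : IsPointed L u v) (h' : IsPointed L u' v'),
        SimL L (u ++ v ++ [t.2.1]) (u' ++ v') ∧
        t.1 = cls L u v h ∧ t.2.2.1 = Rk.one ∧ t.2.2.2 = cls L u' v' h') }

/-- `θ(u,v)`: states of `A_{≡_L}` reachable by reading `u` from an initial state
(any ranks) and then `v` via rank-2 transitions only. -/
def theta (L : Set (ℕ → A)) (u v : List A) : Set (CanonState L) :=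
  { q | ∃ p₀ ∈ (canonAut L).init, ∃ p,
          (canonAut L).Reach p₀ u p ∧ (canonAut L).SafeReach p v q }

/-- `(u,v)` is supported: `θ(u,v) ≠ ∅`. -/
def Supported (L : Set (ℕ → A)) (u v : List A) : Prop := (theta L u v).Nonempty

/-- `(u,v)` is double-supported: two distinct states of `θ(u,v)` in the same safe SCC. -/
def DoubleSupported (L : Set (ℕ → A)) (u v : List A) : Prop :=
  ∃ q ∈ theta L u v, ∃ q' ∈ theta L u v, q ≠ q' ∧ (canonAut L).SameSafeSCC q q'

/-- `(u,v)` is single-supported. -/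
def SingleSupported (L : Set (ℕ → A)) (u v : List A) : Prop :=
  Supported L u v ∧ ¬ DoubleSupported L u v

/-- `w` concatenated with itself `m` times. -/
def repCat (w : List A) : ℕ → List A
  | 0 => []
  | Nat.succ m => w ++ repCat w m

end LangDefs

/-!
Fix a deterministic co-Büchi automaton `D` recognizing `L`. For `v ≠ ε`, the pair `(u, v)` is not
`≈_L ⊥` exactly when some state `q`, reached by a word `∼_L u`, reads `v` along a rank-2 path that
can be closed into a rank-2 loop at `q` (`mem_sfl_iff`). Hence there are only finitely many safe
languages, they are monotone and prefix-closed, and pairs with `⊆`-minimal safe language are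
pointed.

If `A_{≡_L}` accepts `α`, its run is rank-2 from some state `⟦u, v⟧` on, so every prefix of the
remaining suffix lies in `sfl(u, v)`. As `D` has finitely many states, a single state reached by a
word `∼_L u` reads `v` followed by the whole suffix with rank-2 transitions only, whence `α ∈ L`.
Conversely, if `α ∈ L`, cut `α` at a position `N` after which the run of `D` only uses rank-2
transitions and returns infinitely often to its state at `N`: then all prefixes of the suffix lie in
`sfl(α[0, N), ε)`. A pair with this property and minimal safe language stays pointed along the
suffix after a uniformly bounded number of letters, which gives an eventually rank-2 run of
`A_{≡_L}` on `α`.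
-/

theorem Set.Finite.exists_uniform_bound {β : Type*} {S : Set β} (hS : S.Finite)
    (P : β → ℕ → Prop) : ∃ K, ∀ b ∈ S, (∃ k, P b k) → ∃ k ≤ K, P b k := by
  classical
  obtain ⟨K, hK⟩ := (hS.image fun b => if h : ∃ k, P b k then Nat.find h else 0).bddAbove
  refine ⟨K, fun b hb h => ⟨Nat.find h, ?_, Nat.find_spec h⟩⟩
  simpa [h] using hK (Set.mem_image_of_mem _ hb)

theorem Set.Finite.exists_forall_of_antitone {β : Type*} {S : Set β} (hS : S.Finite)
    {P : β → ℕ → Prop} (hP : ∀ b, Antitone (P b)) (h : ∀ k, ∃ b ∈ S, P b k) :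
    ∃ b ∈ S, ∀ k, P b k := by
  obtain ⟨K, hK⟩ := hS.exists_uniform_bound fun b k => ¬ P b k
  obtain ⟨b, hb, hbK⟩ := h K
  refine ⟨b, hb, fun k => by_contra fun hk => ?_⟩
  obtain ⟨j, hjK, hj⟩ := hK b hb ⟨k, hk⟩
  exact hj (hP b hjK hbK)

open CoBuchi

section InfiniteWords

variable {A : Type}

def dropW (α : ℕ → A) (n : ℕ) : ℕ → A := fun i => α (n + i)

theorem dropW_dropW (α : ℕ → A) (m n : ℕ) : dropW (dropW α m) n = dropW α (m + n) := by
  funext i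
  simp only [dropW, Nat.add_assoc]

theorem length_prefW (α : ℕ → A) (n : ℕ) : (prefW α n).length = n := by
  simp [prefW]

theorem getElem_prefW (α : ℕ → A) {n i : ℕ} (h : i < (prefW α n).length) :
    (prefW α n)[i] = α i := by
  simp [prefW]

theorem prefW_succ (α : ℕ → A) (n : ℕ) : prefW α (n + 1) = prefW α n ++ [α n] := by
  simp [prefW, List.range_succ]

theorem prefW_add (α : ℕ → A) (m n : ℕ) :
    prefW α (m + n) = prefW α m ++ prefW (dropW α m) n := by
  induction n with
  | zero => simp [prefW]
  | succ n ih => rw [← Nat.add_assoc, prefW_succ, ih, prefW_succ, List.append_assoc]; rfl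

theorem prefW_prefix (α : ℕ → A) {m n : ℕ} (h : m ≤ n) : prefW α m <+: prefW α n := by
  obtain ⟨k, rfl⟩ := Nat.exists_eq_add_of_le h
  rw [prefW_add]
  exact List.prefix_append _ _

theorem appW_length_add (u : List A) (w : ℕ → A) (k : ℕ) : appW u w (u.length + k) = w k := by
  simp [appW]

theorem dropW_appW (u : List A) (w : ℕ → A) : dropW (appW u w) u.length = w :=
  funext (appW_length_add u w)

theorem prefW_appW (u : List A) (w : ℕ → A) : prefW (appW u w) u.length = u := by
  refine List.ext_getElem (length_prefW _ _) fun i h _ => ?_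
  rw [getElem_prefW]
  exact dif_pos (by rwa [length_prefW] at h)

theorem prefW_appW_add (u : List A) (w : ℕ → A) (k : ℕ) :
    prefW (appW u w) (u.length + k) = u ++ prefW w k := by
  rw [prefW_add, prefW_appW, dropW_appW]

theorem appW_append (u v : List A) (w : ℕ → A) : appW (u ++ v) w = appW u (appW v w) := by
  funext n
  rcases lt_or_ge n u.length with h | h
  · simp [appW, h, List.getElem_append_left, show n < u.length + v.length by omega]
  · obtain ⟨k, rfl⟩ := Nat.exists_eq_add_of_le h
    rw [appW_length_add]
    rcases lt_or_ge k v.length with hk | hk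
    · simp [appW, hk, List.getElem_append_right]
    · obtain ⟨j, rfl⟩ := Nat.exists_eq_add_of_le hk
      rw [appW_length_add, ← Nat.add_assoc, ← List.length_append, appW_length_add]

theorem appW_prefW_dropW (α : ℕ → A) (n : ℕ) : appW (prefW α n) (dropW α n) = α := by
  funext i
  rcases lt_or_ge i n with h | h
  · simp [appW, h, prefW]
  · obtain ⟨k, rfl⟩ := Nat.exists_eq_add_of_le h
    have := appW_length_add (prefW α n) (dropW α n) k
    rwa [length_prefW] at this

theorem repCat_succ (v : List A) (m : ℕ) : repCat v (m + 1) = v ++ repCat v m := rfl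

theorem repCat_add (v : List A) (i j : ℕ) : repCat v (i + j) = repCat v i ++ repCat v j := by
  induction i with
  | zero => simp [repCat]
  | succ i ih => rw [Nat.add_right_comm, repCat_succ, repCat_succ, ih, List.append_assoc]

theorem length_repCat (v : List A) (m : ℕ) : (repCat v m).length = m * v.length := by
  induction m with
  | zero => simp [repCat]
  | succ m ih => rw [repCat_succ, List.length_append, ih, Nat.succ_mul, Nat.add_comm]

variable [Nonempty A]

theorem appW_iterW {v : List A} (hv : v ≠ []) : appW v (iterW v) = iterW v := by
  funext n
  rcases lt_or_ge n v.length with h | h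
  · simp [appW, iterW, hv, h, Nat.mod_eq_of_lt h]
  · obtain ⟨k, rfl⟩ := Nat.exists_eq_add_of_le h
    rw [appW_length_add]
    simp [iterW, hv]

theorem appW_repCat_iterW {v : List A} (hv : v ≠ []) (m : ℕ) :
    appW (repCat v m) (iterW v) = iterW v := by
  induction m with
  | zero => rfl
  | succ m ih => rw [repCat_succ, appW_append, ih, appW_iterW hv]

theorem prefW_iterW_mul {v : List A} (hv : v ≠ []) (m : ℕ) :
    prefW (iterW v) (m * v.length) = repCat v m := by
  rw [← appW_repCat_iterW hv m, ← length_repCat, prefW_appW]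

theorem dropW_iterW_mul {v : List A} (hv : v ≠ []) (m : ℕ) :
    dropW (iterW v) (m * v.length) = iterW v := by
  conv_lhs => rw [← appW_repCat_iterW hv m, ← length_repCat]
  exact dropW_appW _ _

end InfiniteWords

section CanonicalAutomaton

variable {A : Type} {L : Set (ℕ → A)} {u v x y u' v' : List A}

theorem SimL.refl (L : Set (ℕ → A)) (u : List A) : SimL L u u := fun _ => Iff.rfl

theorem SimL.symm (h : SimL L u v) : SimL L v u := fun w => (h w).symm

theorem SimL.trans (h : SimL L u v) (h' : SimL L v x) : SimL L u x := fun w => (h w).trans (h' w)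

theorem SimL.append_right (h : SimL L u v) (x : List A) : SimL L (u ++ x) (v ++ x) := by
  intro w
  rw [appW_append, appW_append]
  exact h _

theorem SimL.append_repCat (h : SimL L (u ++ v) u) (m : ℕ) : SimL L (u ++ repCat v m) u := by
  induction m with
  | zero => simpa [repCat] using SimL.refl L u
  | succ m ih => simpa [repCat_succ] using (h.append_right (repCat v m)).trans ih

variable [Nonempty A] {a : A} {s s' : CanonState L} {h : IsPointed L u v} {h' : IsPointed L u' v'}

theorem nil_mem_sfl_iff : [] ∈ Sfl L u v ↔ ¬ ApproxBot L u v := by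
  rw [Sfl, Set.mem_ofPred_eq, List.append_nil]

theorem sfl_append : Sfl L u (v ++ y) = {x | y ++ x ∈ Sfl L u v} := by
  ext x
  simp only [Sfl, Set.mem_ofPred_eq, List.append_assoc]

theorem equivL_of_cls_eq (e : cls L u v h = cls L u' v' h') : EquivL L u v u' v' :=
  Quotient.exact e

theorem exists_eq_cls (s : CanonState L) : ∃ u v h, s = cls L u v h := by
  obtain ⟨⟨⟨u, v⟩, h⟩, rfl⟩ := Quotient.exists_rep s
  exact ⟨u, v, h, rfl⟩

theorem simL_of_mem_init (hs : s ∈ (canonAut L).init) (e : s = cls L u v h) :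
    SimL L (u ++ v) [] := by
  obtain ⟨u₀, v₀, h₀, hs₀, hsim⟩ := hs
  exact (equivL_of_cls_eq (e.symm.trans hs₀)).1.trans hsim

theorem simL_of_mem_delta {r : Rk} (hst : (s, a, r, s') ∈ (canonAut L).delta)
    (e : s = cls L u v h) (e' : s' = cls L u' v' h') : SimL L (u ++ v ++ [a]) (u' ++ v') := by
  rcases hst with ⟨u₀, v₀, h₀, h₀', -, hs, -, hs'⟩ | ⟨u₀, v₀, u₁, v₁, h₀, h₁, hsim, hs, -, hs'⟩
  · refine ((equivL_of_cls_eq (e.symm.trans hs)).1.append_right [a]).trans ?_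
    rw [List.append_assoc]
    exact (equivL_of_cls_eq (e'.symm.trans hs')).1.symm
  · exact ((equivL_of_cls_eq (e.symm.trans hs)).1.append_right [a]).trans
      (hsim.trans (equivL_of_cls_eq (e'.symm.trans hs')).1.symm)

theorem sfl_eq_of_mem_delta_two (hst : (s, a, Rk.two, s') ∈ (canonAut L).delta)
    (e : s = cls L u v h) (e' : s' = cls L u' v' h') : Sfl L u' v' = Sfl L u (v ++ [a]) := by
  rcases hst with ⟨u₀, v₀, h₀, h₀', -, hs, -, hs'⟩ | ⟨-, -, -, -, -, -, -, -, hr, -⟩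
  · rw [(equivL_of_cls_eq (e'.symm.trans hs')).2, sfl_append, sfl_append,
      (equivL_of_cls_eq (e.symm.trans hs)).2]
  · cases hr

theorem cls_mem_delta_one (hsim : SimL L (u ++ v ++ [a]) (u' ++ v')) :
    (cls L u v h, a, Rk.one, cls L u' v' h') ∈ (canonAut L).delta :=
  Or.inr ⟨u, v, u', v', h, h', hsim, rfl, rfl, rfl⟩

theorem cls_mem_delta_two (h' : IsPointed L u v') (e : v' = v ++ [a]) :
    (cls L u v h, a, Rk.two, cls L u v' h') ∈ (canonAut L).delta := by
  subst e
  exact Or.inl ⟨u, v, h, h', h'.1, rfl, rfl, rfl⟩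

variable {α : ℕ → A} {ρ : ℕ → CanonState L} {r : ℕ → Rk}

theorem simL_of_canonAut_run (h0 : ρ 0 ∈ (canonAut L).init)
    (hstep : ∀ n, (ρ n, α n, r n, ρ (n + 1)) ∈ (canonAut L).delta) (n : ℕ)
    (e : ρ n = cls L u v h) : SimL L (u ++ v) (prefW α n) := by
  induction n generalizing u v with
  | zero => exact simL_of_mem_init h0 e
  | succ n ih =>
    obtain ⟨u₀, v₀, h₀, e₀⟩ := exists_eq_cls (ρ n)
    rw [prefW_succ]
    exact (simL_of_mem_delta (hstep n) e₀ e).symm.trans ((ih e₀).append_right [α n])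

theorem sfl_eq_of_canonAut_safe_run (hstep : ∀ n, (ρ n, α n, r n, ρ (n + 1)) ∈ (canonAut L).delta)
    {N : ℕ} (hsafe : ∀ n, N ≤ n → r n = Rk.two) (e : ρ N = cls L u v h) (k : ℕ)
    (e' : ρ (N + k) = cls L u' v' h') : Sfl L u' v' = Sfl L u (v ++ prefW (dropW α N) k) := by
  induction k generalizing u' v' with
  | zero => simpa [prefW] using (equivL_of_cls_eq (e'.symm.trans e)).2
  | succ k ih =>
    obtain ⟨u₀, v₀, h₀, e₀⟩ := exists_eq_cls (ρ (N + k))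
    have hst := hstep (N + k)
    rw [hsafe _ (Nat.le_add_right N k)] at hst
    rw [sfl_eq_of_mem_delta_two hst e₀ e', prefW_succ, ← List.append_assoc, sfl_append, sfl_append,
      ih e₀]
    rfl

theorem mem_canonAut_lang_of_isPointed_tail
    (hpointed : ∀ u, ∃ p₁ p₂, IsPointed L p₁ p₂ ∧ SimL L (p₁ ++ p₂) u) {M : ℕ}
    (hsim : SimL L (u ++ v) (prefW α M)) (hpt : ∀ k, IsPointed L u (v ++ prefW (dropW α M) k)) :
    α ∈ (canonAut L).Lang := by
  choose p₁ p₂ hp hpsim using hpointed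
  -- rank-1 jumps between arbitrary pointed representatives of the prefixes for the first `M`
  -- steps, then rank-2 steps along the pointed tail
  let ρ : ℕ → CanonState L := fun n => if n < M
    then cls L (p₁ (prefW α n)) (p₂ (prefW α n)) (hp _)
    else cls L u (v ++ prefW (dropW α M) (n - M)) (hpt _)
  have hρ : ∀ n, ∃ u v h, ρ n = cls L u v h ∧ SimL L (u ++ v) (prefW α n) := by
    intro n
    by_cases hn : n < M
    · exact ⟨_, _, _, if_pos hn, hpsim _⟩
    · refine ⟨_, _, _, if_neg hn, ?_⟩
      obtain ⟨k, rfl⟩ := Nat.exists_eq_add_of_le (not_lt.mp hn)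
      rw [Nat.add_sub_cancel_left, ← List.append_assoc, prefW_add]
      exact hsim.append_right _
  refine ⟨ρ 0, ?_, ρ, fun n => if n < M then .one else .two, rfl, fun n => ?_, M,
    fun n hn => if_neg (by omega)⟩
  · exact hρ 0
  beta_reduce
  by_cases hn : n < M
  · obtain ⟨u₁, v₁, h₁, e₁, s₁⟩ := hρ n
    obtain ⟨u₂, v₂, h₂, e₂, s₂⟩ := hρ (n + 1)
    rw [if_pos hn, e₁, e₂]
    rw [prefW_succ] at s₂
    exact cls_mem_delta_one ((s₁.append_right _).trans s₂.symm)
  · have e₁ : ρ n = cls L u (v ++ prefW (dropW α M) (n - M)) (hpt _) := if_neg hn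
    have e₂ : ρ (n + 1) = cls L u (v ++ prefW (dropW α M) (n - M + 1)) (hpt _) := by
      simp only [ρ, if_neg (show ¬ n + 1 < M by omega), show n + 1 - M = n - M + 1 by omega]
    rw [if_neg hn, e₁, e₂]
    refine cls_mem_delta_two _ ?_
    rw [prefW_succ, List.append_assoc]
    simp only [dropW, Nat.add_sub_cancel' (not_lt.mp hn)]

end CanonicalAutomaton

structure DetCoBuchi (A Q : Type) where
  start : Q
  next : Q → A → Q
  rank : Q → A → Rk

namespace DetCoBuchi

variable {A Q : Type} (D : DetCoBuchi A Q)

def toCoBuchi : CoBuchi A Q where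
  init := {D.start}
  delta := {t | t.2.2 = (D.rank t.1 t.2.1, D.next t.1 t.2.1)}

def run (q : Q) (x : List A) : Q := x.foldl D.next q

def IsSafe : Q → List A → Prop
  | _, [] => True
  | q, a :: x => D.rank q a = .two ∧ IsSafe (D.next q a) x

def AcceptsFrom (q : Q) (w : ℕ → A) : Prop :=
  ∃ N, ∀ n, N ≤ n → D.rank (D.run q (prefW w n)) (w n) = .two

def lang : Set (ℕ → A) := {w | D.AcceptsFrom D.start w}

def classStates (u : List A) : Set Q := {q | ∃ u', SimL D.lang u' u ∧ D.run D.start u' = q}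

def IsSafePrefix (p q : Q) (x : List A) : Prop :=
  ∃ z, D.IsSafe p (x ++ z) ∧ D.run p (x ++ z) = q

variable {D} {p q : Q} {u v x y : List A}

theorem run_append : D.run q (x ++ y) = D.run (D.run q x) y := List.foldl_append

theorem run_singleton (a : A) : D.run q [a] = D.next q a := rfl

theorem isSafe_append : D.IsSafe q (x ++ y) ↔ D.IsSafe q x ∧ D.IsSafe (D.run q x) y := by
  induction x generalizing q with
  | nil => simp [IsSafe, run]
  | cons a x ih => simp [IsSafe, ih, and_assoc, run]

theorem isSafe_singleton (a : A) : D.IsSafe q [a] ↔ D.rank q a = .two := by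
  simp [IsSafe]

theorem IsSafe.of_prefix (h : x <+: y) (hy : D.IsSafe q y) : D.IsSafe q x := by
  obtain ⟨z, rfl⟩ := h
  exact (isSafe_append.mp hy).1

theorem isSafe_repCat (hs : D.IsSafe q x) (hl : D.run q x = q) (m : ℕ) :
    D.IsSafe q (repCat x m) := by
  induction m with
  | zero => trivial
  | succ m ih => rw [repCat_succ, isSafe_append, hl]; exact ⟨hs, ih⟩

theorem run_prefW_succ (w : ℕ → A) (n : ℕ) :
    D.run q (prefW w (n + 1)) = D.next (D.run q (prefW w n)) (w n) := by
  rw [prefW_succ, run_append, run_singleton]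

theorem isSafe_prefW_dropW_iff (w : ℕ → A) (n k : ℕ) :
    D.IsSafe (D.run q (prefW w n)) (prefW (dropW w n) k) ↔
      ∀ i < k, D.rank (D.run q (prefW w (n + i))) (w (n + i)) = .two := by
  induction k with
  | zero => simp [prefW, IsSafe]
  | succ k ih =>
    rw [prefW_succ, isSafe_append, ih, Nat.forall_lt_succ_right, ← run_append, ← prefW_add,
      isSafe_singleton]
    rfl

theorem acceptsFrom_of_forall_isSafe {w : ℕ → A} (h : ∀ k, D.IsSafe q (prefW w k)) :
    D.AcceptsFrom q w := by
  refine ⟨0, fun n _ => ?_⟩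
  have := h (n + 1)
  rw [prefW_succ, isSafe_append, isSafe_singleton] at this
  exact this.2

theorem acceptsFrom_appW_iff (u : List A) (w : ℕ → A) :
    D.AcceptsFrom q (appW u w) ↔ D.AcceptsFrom (D.run q u) w := by
  have step : ∀ k, D.rank (D.run q (prefW (appW u w) (u.length + k))) (appW u w (u.length + k))
      = D.rank (D.run (D.run q u) (prefW w k)) (w k) := fun k => by
    rw [prefW_appW_add, appW_length_add, run_append]
  constructor
  · rintro ⟨N, hN⟩
    exact ⟨N, fun n hn => step n ▸ hN _ (by omega)⟩
  · rintro ⟨N, hN⟩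
    refine ⟨u.length + N, fun n hn => ?_⟩
    obtain ⟨k, rfl⟩ := Nat.exists_eq_add_of_le (le_trans (Nat.le_add_right _ _) hn)
    exact (step k).symm ▸ hN k (by omega)

theorem appW_mem_lang_iff (u : List A) (w : ℕ → A) :
    appW u w ∈ D.lang ↔ D.AcceptsFrom (D.run D.start u) w :=
  acceptsFrom_appW_iff u w

theorem simL_of_run_eq (h : D.run D.start u = D.run D.start v) :
    SimL D.lang u v := fun w => by
  rw [appW_mem_lang_iff, appW_mem_lang_iff, h]

theorem mem_toCoBuchi_delta {a : A} {r : Rk} :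
    (p, a, r, q) ∈ D.toCoBuchi.delta ↔ r = D.rank p a ∧ q = D.next p a :=
  Prod.ext_iff

theorem lang_toCoBuchi : D.toCoBuchi.Lang = D.lang := by
  ext w
  constructor
  · rintro ⟨_, rfl, ρ, r, hρ0, hstep, N, hN⟩
    simp only [mem_toCoBuchi_delta] at hstep
    have hρ : ∀ n, ρ n = D.run D.start (prefW w n) := by
      intro n
      induction n with
      | zero => exact hρ0
      | succ n ih => rw [run_prefW_succ, ← ih]; exact (hstep n).2
    refine ⟨N, fun n hn => ?_⟩
    rw [← hρ, ← (hstep n).1]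
    exact hN n hn
  · rintro ⟨N, hN⟩
    refine ⟨D.start, rfl, fun n => D.run D.start (prefW w n),
      fun n => D.rank (D.run D.start (prefW w n)) (w n), rfl, fun n => ?_, N, hN⟩
    exact mem_toCoBuchi_delta.mpr ⟨rfl, run_prefW_succ w n⟩

theorem run_start_mem_classStates (u : List A) : D.run D.start u ∈ D.classStates u :=
  ⟨u, SimL.refl _ u, rfl⟩

theorem mem_classStates_of_simL (h : SimL D.lang u v) (hq : q ∈ D.classStates u) :
    q ∈ D.classStates v := by
  obtain ⟨u', hu', rfl⟩ := hq
  exact ⟨u', hu'.trans h, rfl⟩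

theorem run_mem_classStates_append (hq : q ∈ D.classStates u) (x : List A) :
    D.run q x ∈ D.classStates (u ++ x) := by
  obtain ⟨u', hu', rfl⟩ := hq
  exact ⟨u' ++ x, hu'.append_right x, run_append⟩

theorem IsSafePrefix.isSafe (h : D.IsSafePrefix p q x) : D.IsSafe p x := by
  obtain ⟨z, hs, -⟩ := h
  exact (isSafe_append.mp hs).1

theorem IsSafePrefix.of_prefix (hxy : x <+: y) (h : D.IsSafePrefix p q y) :
    D.IsSafePrefix p q x := by
  obtain ⟨t, rfl⟩ := hxy
  obtain ⟨z, hs, hl⟩ := h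
  exact ⟨t ++ z, by rwa [← List.append_assoc], by rwa [← List.append_assoc]⟩

theorem isSafePrefix_append :
    D.IsSafePrefix p q (x ++ y) ↔ D.IsSafe p x ∧ D.IsSafePrefix (D.run p x) q y := by
  simp only [IsSafePrefix, List.append_assoc, isSafe_append, run_append, and_assoc,
    exists_and_left]

theorem IsSafePrefix.rotate (h : D.IsSafePrefix q q (x ++ y)) :
    D.IsSafePrefix (D.run q x) (D.run q x) y := by
  obtain ⟨hx, z, hs, hl⟩ := isSafePrefix_append.mp h
  refine ⟨z ++ x, ?_, ?_⟩
  · rw [← List.append_assoc, isSafe_append, hl]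
    exact ⟨hs, hx⟩
  · rw [← List.append_assoc, run_append, hl]

section SafeLanguage

variable [Nonempty A]

theorem acceptsFrom_iterW (hx : x ≠ []) (hs : D.IsSafe q x) (hl : D.run q x = q) :
    D.AcceptsFrom q (iterW x) := by
  refine acceptsFrom_of_forall_isSafe fun k => ?_
  have hk : k ≤ k * x.length := Nat.le_mul_of_pos_right k (List.length_pos_iff.mpr hx)
  refine IsSafe.of_prefix (prefW_prefix _ hk) ?_
  rw [prefW_iterW_mul hx]
  exact isSafe_repCat hs hl k

theorem exists_safe_loop_of_acceptsFrom_iterW [Finite Q] (hx : x ≠ [])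
    (h : D.AcceptsFrom q (iterW x)) :
    ∃ m c, 0 < c ∧ D.IsSafe (D.run q (repCat x m)) (repCat x c) ∧
      D.run (D.run q (repCat x m)) (repCat x c) = D.run q (repCat x m) := by
  obtain ⟨N, hN⟩ := h
  obtain ⟨i, j, hij, heq⟩ := Set.finite_univ.exists_lt_map_eq_of_forall_mem
    (f := fun i => D.run q (repCat x (N + i))) fun _ => Set.mem_univ _
  have hNi : N ≤ (N + i) * x.length :=
    (Nat.le_add_right N i).trans (Nat.le_mul_of_pos_right _ (List.length_pos_iff.mpr hx))
  refine ⟨N + i, j - i, by omega, ?_, ?_⟩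
  · have hsafe := (isSafe_prefW_dropW_iff (D := D) (q := q) (iterW x) ((N + i) * x.length)
      ((j - i) * x.length)).mpr fun k _ => hN _ (by omega)
    rwa [prefW_iterW_mul hx, dropW_iterW_mul hx, prefW_iterW_mul hx] at hsafe
  · rw [← run_append, ← repCat_add, show N + i + (j - i) = N + j by omega]
    exact heq.symm

theorem not_approxBot_of_isSafePrefix (hq : q ∈ D.classStates u) (h : D.IsSafePrefix q q v) :
    ¬ ApproxBot D.lang u v := by
  rintro ⟨hv, hbot⟩
  obtain ⟨u', hu', rfl⟩ := hq
  obtain ⟨z, hs, hl⟩ := h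
  have hacc := acceptsFrom_iterW (by simp [hv]) hs hl
  refine hbot z ?_ ((hu' _).mp ((appW_mem_lang_iff _ _).mpr hacc))
  have hloop : SimL D.lang (u' ++ (v ++ z)) u' := simL_of_run_eq (by rw [run_append, hl])
  rw [List.append_assoc]
  exact (hu'.symm.append_right _).trans (hloop.trans hu')

theorem exists_isSafePrefix_of_not_approxBot [Finite Q] (hv : v ≠ [])
    (h : ¬ ApproxBot D.lang u v) : ∃ q ∈ D.classStates u, D.IsSafePrefix q q v := by
  obtain ⟨y, hsim, hmem⟩ : ∃ y, SimL D.lang (u ++ v ++ y) u ∧ upW u (v ++ y) ∈ D.lang := by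
    by_contra! hc
    exact h ⟨hv, hc⟩
  have hvy : v ++ y ≠ [] := by simp [hv]
  obtain ⟨m, c, hc, hs, hl⟩ :=
    exists_safe_loop_of_acceptsFrom_iterW hvy ((appW_mem_lang_iff _ _).mp hmem)
  obtain ⟨c, rfl⟩ : ∃ c', c = c' + 1 := ⟨c - 1, by omega⟩
  have hq := run_mem_classStates_append (run_start_mem_classStates (D := D) u) (repCat (v ++ y) m)
  rw [List.append_assoc] at hsim
  refine ⟨_, mem_classStates_of_simL (hsim.append_repCat m) hq, y ++ repCat (v ++ y) c, ?_⟩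
  rw [← List.append_assoc, ← repCat_succ]
  exact ⟨hs, hl⟩

theorem mem_sfl_iff [Finite Q] :
    x ∈ Sfl D.lang u v ↔ v ++ x = [] ∨ ∃ q ∈ D.classStates u, D.IsSafePrefix q q (v ++ x) := by
  refine ⟨fun h => ?_, ?_⟩
  · by_cases hvx : v ++ x = []
    · exact Or.inl hvx
    · exact Or.inr (exists_isSafePrefix_of_not_approxBot hvx h)
  · rintro (hvx | ⟨q, hq, h⟩)
    · exact fun hbot => hbot.1 hvx
    · exact not_approxBot_of_isSafePrefix hq h

theorem sfl_mono [Finite Q] {u₁ u₂ : List A} (h : SimL D.lang (u₁ ++ u₂) u) (v : List A) :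
    Sfl D.lang u₁ (u₂ ++ v) ⊆ Sfl D.lang u v := by
  intro x hx
  rcases mem_sfl_iff.mp hx with hnil | ⟨q, hq, hsp⟩
  · exact mem_sfl_iff.mpr (Or.inl (by simp_all))
  · rw [List.append_assoc] at hsp
    exact mem_sfl_iff.mpr
      (Or.inr ⟨_, mem_classStates_of_simL h (run_mem_classStates_append hq u₂), hsp.rotate⟩)

theorem mem_sfl_of_prefix [Finite Q] (hxy : x <+: y) (hy : y ∈ Sfl D.lang u v) :
    x ∈ Sfl D.lang u v := by
  rcases mem_sfl_iff.mp hy with hnil | ⟨q, hq, hsp⟩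
  · obtain ⟨z, rfl⟩ := hxy
    exact mem_sfl_iff.mpr (Or.inl (by simp_all))
  · exact mem_sfl_iff.mpr
      (Or.inr ⟨q, hq, hsp.of_prefix ((List.prefix_append_right_inj v).mpr hxy)⟩)

theorem finite_range_sfl [Finite Q] (D : DetCoBuchi A Q) :
    (Set.range fun p : List A × List A => Sfl D.lang p.1 p.2).Finite := by
  refine (Set.finite_range fun bS : Prop × Set (Q × Q) =>
    {x : List A | (bS.1 ∧ x = []) ∨ ∃ pq ∈ bS.2, D.IsSafePrefix pq.2 pq.1 x}).subset ?_
  rintro _ ⟨⟨u, v⟩, rfl⟩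
  -- `sfl(u, v)` only depends on whether `v = ε` and on the safe `v`-runs from `D.classStates u`
  refine ⟨(v = [], {pq | pq.1 ∈ D.classStates u ∧ D.IsSafe pq.1 v ∧ D.run pq.1 v = pq.2}), ?_⟩
  ext x
  simp only [mem_sfl_iff, isSafePrefix_append, List.append_eq_nil_iff, Set.mem_ofPred_eq]
  constructor
  · rintro (hnil | ⟨⟨q, p⟩, ⟨hq, hs, hp⟩, hsp⟩)
    · exact Or.inl hnil
    · exact Or.inr ⟨q, hq, hs, hp ▸ hsp⟩
  · rintro (hnil | ⟨q, hq, hs, hsp⟩)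
    · exact Or.inl hnil
    · exact Or.inr ⟨(q, D.run q v), ⟨hq, hs, rfl⟩, hsp⟩

end SafeLanguage

section FiniteStates

variable [Nonempty A] [Finite Q]

theorem exists_minimal_sfl (P : List A → List A → Prop) (h : ∃ u v, P u v) :
    ∃ u v, P u v ∧ ∀ u' v', P u' v' → Sfl D.lang u' v' ⊆ Sfl D.lang u v →
      Sfl D.lang u' v' = Sfl D.lang u v := by
  obtain ⟨u₀, v₀, h₀⟩ := h
  have hfin : {T | ∃ p : List A × List A, P p.1 p.2 ∧ Sfl D.lang p.1 p.2 = T}.Finite :=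
    (finite_range_sfl D).subset fun _ ⟨p, _, hp⟩ => ⟨p, hp⟩
  obtain ⟨_, ⟨⟨u, v⟩, hP, rfl⟩, hmin⟩ := hfin.exists_minimal ⟨_, (u₀, v₀), h₀, rfl⟩
  exact ⟨u, v, hP, fun u' v' hP' hsub => le_antisymm hsub (hmin ⟨(u', v'), hP', rfl⟩ hsub)⟩

theorem exists_isPointed (u : List A) :
    ∃ p₁ p₂, IsPointed D.lang p₁ p₂ ∧ SimL D.lang (p₁ ++ p₂) u := by
  obtain ⟨p₁, p₂, ⟨hsim, hbot⟩, hmin⟩ := exists_minimal_sfl (D := D)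
    (fun p₁ p₂ => SimL D.lang (p₁ ++ p₂) u ∧ ¬ ApproxBot D.lang p₁ p₂)
    ⟨u, [], by simpa using SimL.refl _ u, fun h => h.1 rfl⟩
  refine ⟨p₁, p₂, ⟨hbot, fun u₁ u₂ h₁₂ hbot' => (hmin u₁ (u₂ ++ p₂) ⟨?_, hbot'⟩
    (sfl_mono h₁₂ p₂)).symm⟩, hsim⟩
  rw [← List.append_assoc]
  exact (h₁₂.append_right p₂).trans hsim

theorem exists_isPointed_tail {u₀ : List A} {β : ℕ → A}
    (h : ∀ k, prefW β k ∈ Sfl D.lang u₀ []) :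
    ∃ u v M, SimL D.lang (u ++ v) (u₀ ++ prefW β M) ∧
      ∀ k, IsPointed D.lang u (v ++ prefW (dropW β M) k) := by
  obtain ⟨u, v, ⟨hsim, hβ⟩, hmin⟩ := exists_minimal_sfl (D := D)
    (fun u v => SimL D.lang (u ++ v) u₀ ∧ ∀ k, prefW β k ∈ Sfl D.lang u v)
    ⟨u₀, [], by simpa using SimL.refl _ u₀, h⟩
  obtain ⟨K, hK⟩ := (finite_range_sfl D).exists_uniform_bound fun T k => prefW β k ∉ T
  refine ⟨u, v ++ prefW β K, K, by simpa using hsim.append_right (prefW β K), fun k => ?_⟩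
  rw [List.append_assoc, ← prefW_add]
  refine ⟨hβ (K + k), fun u₁ u₂ h₁₂ hbot => ?_⟩
  suffices Sfl D.lang u v = Sfl D.lang u₁ (u₂ ++ v) by
    rw [← List.append_assoc u₂, sfl_append, sfl_append, this]
  -- Either `(u₁, u₂ ++ v)` keeps every prefix of `β` safe and minimality applies, or it loses one
  -- of length `≤ K`, contradicting `hbot`.
  by_cases hall : ∀ k, prefW β k ∈ Sfl D.lang u₁ (u₂ ++ v)
  · refine (hmin u₁ (u₂ ++ v) ⟨?_, hall⟩ (sfl_mono h₁₂ v)).symm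
    rw [← List.append_assoc]
    exact (h₁₂.append_right v).trans hsim
  · push Not at hall
    obtain ⟨j, hjK, hj⟩ := hK _ ⟨(u₁, u₂ ++ v), rfl⟩ hall
    refine absurd (mem_sfl_of_prefix (prefW_prefix β (by omega : j ≤ K + k)) ?_) hj
    show ¬ ApproxBot _ _ _
    rwa [List.append_assoc]

theorem appW_mem_lang_of_forall_prefW_mem_sfl {u₀ : List A} {β : ℕ → A}
    (hsim : SimL D.lang (u ++ v) u₀) (h : ∀ k, prefW β k ∈ Sfl D.lang u v) :
    appW u₀ β ∈ D.lang := by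
  have hsafe : ∀ k, ∃ q ∈ D.classStates u, D.IsSafe q (v ++ prefW β k) := fun k => by
    rcases mem_sfl_iff.mp (h k) with hnil | ⟨q, hq, hsp⟩
    · exact ⟨_, run_start_mem_classStates u, by rw [hnil]; trivial⟩
    · exact ⟨q, hq, hsp.isSafe⟩
  obtain ⟨_, ⟨u', hu', rfl⟩, hq⟩ := (Set.toFinite _).exists_forall_of_antitone
    (fun q j k hjk hk => hk.of_prefix ((List.prefix_append_right_inj v).mpr (prefW_prefix β hjk)))
    hsafe
  have hacc : D.AcceptsFrom (D.run D.start u') (appW v β) := by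
    refine acceptsFrom_of_forall_isSafe fun k => (hq k).of_prefix ?_
    rw [← prefW_appW_add]
    exact prefW_prefix _ (Nat.le_add_left k v.length)
  have := (hu' _).mp ((appW_mem_lang_iff _ _).mpr hacc)
  rwa [← appW_append, hsim] at this

theorem canonAut_lang_subset : (canonAut D.lang).Lang ⊆ D.lang := by
  rintro α ⟨_, hs, ρ, r, rfl, hstep, N, hN⟩
  obtain ⟨u, v, h, e⟩ := exists_eq_cls (ρ N)
  have hmem : ∀ k, prefW (dropW α N) k ∈ Sfl D.lang u v := fun k => by
    obtain ⟨u', v', h', e'⟩ := exists_eq_cls (ρ (N + k))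
    have hnil : [] ∈ Sfl D.lang u' v' := nil_mem_sfl_iff.mpr h'.1
    rw [sfl_eq_of_canonAut_safe_run hstep hN e k e', sfl_append] at hnil
    simpa using hnil
  rw [← appW_prefW_dropW α N]
  exact appW_mem_lang_of_forall_prefW_mem_sfl (simL_of_canonAut_run hs hstep N e) hmem

theorem exists_forall_prefW_dropW_mem_sfl {α : ℕ → A} (hα : α ∈ D.lang) :
    ∃ N, ∀ k, prefW (dropW α N) k ∈ Sfl D.lang (prefW α N) [] := by
  obtain ⟨N₀, hN₀⟩ := hα
  -- a state visited infinitely often once the run has become safe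
  obtain ⟨q, -, hq⟩ := Set.finite_univ.exists_forall_of_antitone
    (P := fun q m => ∃ n, m ≤ n ∧ D.run D.start (prefW α (N₀ + n)) = q)
    (fun _ _ _ hjk ⟨n, hn, e⟩ => ⟨n, hjk.trans hn, e⟩)
    (fun m => ⟨_, Set.mem_univ _, m, le_rfl, rfl⟩)
  obtain ⟨n₀, -, hn₀⟩ := hq 0
  refine ⟨N₀ + n₀, fun k => mem_sfl_iff.mpr (Or.inr ⟨q, hn₀ ▸ run_start_mem_classStates _, ?_⟩)⟩
  obtain ⟨n, hn, hnq⟩ := hq (n₀ + k)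
  refine ⟨prefW (dropW (dropW α (N₀ + n₀)) k) (n - n₀ - k), ?_⟩
  rw [List.nil_append, ← prefW_add, ← hn₀, isSafe_prefW_dropW_iff, ← run_append, ← prefW_add,
    show N₀ + n₀ + (k + (n - n₀ - k)) = N₀ + n by omega]
  exact ⟨fun i _ => hN₀ _ (by omega), hnq.trans hn₀.symm⟩

theorem canonAut_lang_eq (D : DetCoBuchi A Q) : (canonAut D.lang).Lang = D.lang := by
  refine canonAut_lang_subset.antisymm fun α hα => ?_
  obtain ⟨N, hN⟩ := exists_forall_prefW_dropW_mem_sfl hα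
  obtain ⟨u, v, M, hsim, hpt⟩ := exists_isPointed_tail hN
  rw [← prefW_add] at hsim
  rw [dropW_dropW] at hpt
  exact mem_canonAut_lang_of_isPointed_tail exists_isPointed hsim hpt

end FiniteStates

end DetCoBuchi

theorem CoBuchi.Deterministic.exists_eq_toCoBuchi {A Q : Type} {M : CoBuchi A Q}
    (hM : M.Deterministic) : ∃ D : DetCoBuchi A Q, D.toCoBuchi = M := by
  choose t ht htu using hM.2
  obtain ⟨q₀, hq₀, hq₀u⟩ := hM.1
  refine ⟨⟨q₀, fun q a => (t q a).2, fun q a => (t q a).1⟩, ?_⟩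
  obtain ⟨init, delta⟩ := M
  rw [DetCoBuchi.toCoBuchi, CoBuchi.mk.injEq]
  constructor
  · exact (Set.eq_singleton_iff_unique_mem.mpr ⟨hq₀, hq₀u⟩).symm
  · ext ⟨q, a, r, q'⟩
    exact ⟨fun h => (show (r, q') = t q a from h) ▸ ht q a, fun h => htu q a (r, q') h⟩

theorem stmt7_general {A : Type} [Nonempty A] (L : Set (ℕ → A))
    (hrec : DCWRecognizable L) :
    (canonAut L).Lang = L := by
  obtain ⟨Q, _, M, hM, rfl⟩ := hrec
  obtain ⟨D, rfl⟩ := hM.exists_eq_toCoBuchi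
  rw [D.lang_toCoBuchi]
  exact D.canonAut_lang_eq

/-- the canonical automaton accepts exactly `L`. -/
theorem stmt7 {A : Type} [Nonempty A] [Fintype A] (L : Set (ℕ → A))
    (hrec : DCWRecognizable L) :
    (canonAut L).Lang = L :=
  stmt7_general L hrec
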